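/- arXiv:2307.16506 — 7 statements merged into one kernel-verified Lean document; each statement's English description precedes it below -/
import Mathlib

section
/- For every natural number N, every family of 4-vectors p : Fin N → (Fin 4 → ℝ), and every pair of selection functions r c : Fin 5 → Fin N, the 5×5 matrix with entries (Gram p) (r i) (c j) has determinant zero; that is, every 5×5 minor of the Minkowski Gram matrix of N 4-vectors vanishes. -/
/-- Minkowski inner product of two 4-vectors. -/
def mink (p q : Fin 4 → ℝ) : ℝ :=
  p 0 * q 0 - p 1 * q 1 - p 2 * q 2 - p 3 * q 3

/-- Minkowski Gram matrix of a family of 4-vectors. -/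
def Gram {N : ℕ} (p : Fin N → (Fin 4 → ℝ)) : Matrix (Fin N) (Fin N) ℝ :=
  Matrix.of fun i j => mink (p i) (p j)

/-- Every 5×5 minor of the Minkowski Gram matrix of N 4-vectors vanishes. -/
theorem gram_five_minor_det_eq_zero (N : ℕ) (p : Fin N → (Fin 4 → ℝ))
    (r c : Fin 5 → Fin N) :
    Matrix.det (Matrix.of fun i j : Fin 5 => Gram p (r i) (c j)) = 0 := by
  set A : Matrix (Fin 5) (Fin 5) ℝ :=
    Matrix.of fun i k => ![p (r i) 0, -(p (r i) 1), -(p (r i) 2), -(p (r i) 3), 0] k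
  set B : Matrix (Fin 5) (Fin 5) ℝ :=
    Matrix.of fun k j => ![p (c j) 0, p (c j) 1, p (c j) 2, p (c j) 3, 0] k
  have hM : (Matrix.of fun i j : Fin 5 => Gram p (r i) (c j)) = A * B := by
    ext i j
    simp [A, B, Matrix.mul_apply, Fin.sum_univ_five, Gram, mink]
    ring
  have hB : B.det = 0 := by
    apply Matrix.det_eq_zero_of_row_eq_zero 4
    intro j
    simp [B]
  rw [hM, Matrix.det_mul, hB, mul_zero]
end

section
/- For future-pointing lightlike 4-vectors p and q, the Minkowski inner product ⟪p, q⟫ equals zero if and only if p and q are collinear, i.e., there exists t > 0 with q = t • p. -/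
/-- A 4-vector is future-pointing lightlike if its time component is positive
and its Minkowski norm squared is zero. -/
def FPLightlike (p : Fin 4 → ℝ) : Prop := p 0 > 0 ∧ mink p p = 0

/-- For future-pointing lightlike 4-vectors, the Minkowski inner product vanishes
iff the vectors are collinear (with a positive factor). -/
theorem mink_eq_zero_iff_collinear (p q : Fin 4 → ℝ)
    (hp : FPLightlike p) (hq : FPLightlike q) :
    mink p q = 0 ↔ ∃ t : ℝ, t > 0 ∧ q = t • p := by
  obtain ⟨hp0, hpm⟩ := hp
  obtain ⟨hq0, hqm⟩ := hq
  unfold mink at *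
  constructor
  · intro h
    refine ⟨q 0 / p 0, div_pos hq0 hp0, ?_⟩
    have hsum : (q 0 * p 1 - p 0 * q 1)^2 + (q 0 * p 2 - p 0 * q 2)^2
        + (q 0 * p 3 - p 0 * q 3)^2 = 0 := by linear_combination (-(q 0)^2) * hpm - (p 0)^2 * hqm + 2 * (p 0) * (q 0) * h
    have h1 : q 0 * p 1 - p 0 * q 1 = 0 := by nlinarith [sq_nonneg (q 0 * p 1 - p 0 * q 1), sq_nonneg (q 0 * p 2 - p 0 * q 2), sq_nonneg (q 0 * p 3 - p 0 * q 3)]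
    have h2 : q 0 * p 2 - p 0 * q 2 = 0 := by nlinarith [sq_nonneg (q 0 * p 1 - p 0 * q 1), sq_nonneg (q 0 * p 2 - p 0 * q 2), sq_nonneg (q 0 * p 3 - p 0 * q 3)]
    have h3 : q 0 * p 3 - p 0 * q 3 = 0 := by nlinarith [sq_nonneg (q 0 * p 1 - p 0 * q 1), sq_nonneg (q 0 * p 2 - p 0 * q 2), sq_nonneg (q 0 * p 3 - p 0 * q 3)]
    funext i
    have hp0' : p 0 ≠ 0 := ne_of_gt hp0
    fin_cases i <;> simp [Pi.smul_apply, smul_eq_mul] <;> field_simp <;> linarith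
  · rintro ⟨t, ht, rfl⟩
    simp only [Pi.smul_apply, smul_eq_mul]
    linear_combination t * hpm
end

section
/- For every N ≥ 4, the real vector space of permutation-equivariant linear maps from Matrix (Fin N) (Fin N) ℝ to Matrix (Fin N) (Fin N) ℝ has dimension exactly 15. -/
/-!
An equivariant `L` is determined by its coefficients `c(i, j, k, l) = L(E_{kl})_{ij}`, and
equivariance says exactly that `c` is invariant under the diagonal action of `S_N` on quadruples.
Two quadruples lie in the same orbit iff they have the same equality pattern, so equivariant maps
correspond to real functions on the set of patterns realised in `Fin N`. For `N ≥ 4` these are all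
the partitions of a four-element set, and there are Bell(4) = 15 of them.
-/

/-- Action of a permutation on square matrices: `(σ • T) i j = T (σ⁻¹ i) (σ⁻¹ j)`. -/
def permAct {N : ℕ} (σ : Equiv.Perm (Fin N)) (T : Matrix (Fin N) (Fin N) ℝ) :
    Matrix (Fin N) (Fin N) ℝ :=
  Matrix.of fun i j => T (σ⁻¹ i) (σ⁻¹ j)

/-- The subspace of permutation-equivariant linear endomorphisms of N×N matrices. -/
noncomputable def EquivariantMaps (N : ℕ) :
    Submodule ℝ (Matrix (Fin N) (Fin N) ℝ →ₗ[ℝ] Matrix (Fin N) (Fin N) ℝ) where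
  carrier := {L | ∀ (σ : Equiv.Perm (Fin N)) (T : Matrix (Fin N) (Fin N) ℝ),
    L (permAct σ T) = permAct σ (L T)}
  add_mem' := by
    intro a b ha hb σ T
    simp only [LinearMap.add_apply, ha σ T, hb σ T]
    ext i j
    simp [permAct]
  zero_mem' := by
    intro σ T
    ext i j
    simp [permAct]
  smul_mem' := by
    intro c a ha σ T
    simp only [LinearMap.smul_apply, ha σ T]
    ext i j
    simp [permAct]

open Matrix

section EqPattern

variable {α ι κ : Type*}

def eqPattern [DecidableEq ι] (q : α → ι) : α → α → Bool :=
  fun a b => decide (q a = q b)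

variable [DecidableEq ι] [DecidableEq κ]

theorem eqPattern_eq_eqPattern_iff {u : α → ι} {v : α → κ} :
    eqPattern u = eqPattern v ↔ ∀ a b, (u a = u b ↔ v a = v b) := by
  simp only [funext_iff, eqPattern, decide_eq_decide]

theorem eqPattern_comp_of_injective {f : ι → κ} (hf : Function.Injective f) (q : α → ι) :
    eqPattern (f ∘ q) = eqPattern q :=
  eqPattern_eq_eqPattern_iff.2 fun _ _ => hf.eq_iff

theorem exists_endo_eqPattern_eq [DecidableEq α] (q : α → ι) :
    ∃ q' : α → α, eqPattern q' = eqPattern q := by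
  rcases isEmpty_or_nonempty α with hα | hα
  · exact ⟨id, funext hα.elim⟩
  · refine ⟨Function.invFun q ∘ q, eqPattern_eq_eqPattern_iff.2 fun a b => ⟨fun h => ?_, fun h => ?_⟩⟩
    · simpa only [Function.comp_apply, Function.invFun_eq ⟨_, rfl⟩] using congrArg q h
    · simp only [Function.comp_apply, h]

theorem range_eqPattern_eq_of_embedding [DecidableEq α] (e : α ↪ ι) :
    Set.range (eqPattern : (α → ι) → _) = Set.range (eqPattern : (α → α) → _) := by
  ext p
  constructor
  · rintro ⟨q, rfl⟩
    exact exists_endo_eqPattern_eq q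
  · rintro ⟨q, rfl⟩
    exact ⟨e ∘ q, eqPattern_comp_of_injective e.injective q⟩

theorem Equiv.Perm.exists_comp_eq_of_eqPattern_eq [Finite α] {u v : α → ι}
    (h : eqPattern u = eqPattern v) : ∃ σ : Equiv.Perm ι, σ ∘ v = u := by
  rw [eqPattern_eq_eqPattern_iff] at h
  obtain ⟨σ, hσ⟩ := Equiv.Perm.exists_extending_pair (Subtype.val : Set.range v → ι)
    (u ∘ Set.rangeSplitting v) Subtype.val_injective fun x y hxy => by
      apply Subtype.ext
      rw [← Set.apply_rangeSplitting v x, ← Set.apply_rangeSplitting v y]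
      exact (h _ _).1 hxy
  exact ⟨σ, funext fun a => (hσ ⟨v a, a, rfl⟩).trans ((h _ _).2 (Set.apply_rangeSplitting v _))⟩

end EqPattern

section PermAct

variable {N : ℕ}

theorem permAct_apply (σ : Equiv.Perm (Fin N)) (T : Matrix (Fin N) (Fin N) ℝ) (i j : Fin N) :
    permAct σ T i j = T (σ⁻¹ i) (σ⁻¹ j) :=
  rfl

theorem permAct_apply_apply (σ : Equiv.Perm (Fin N)) (T : Matrix (Fin N) (Fin N) ℝ)
    (i j : Fin N) : permAct σ T (σ i) (σ j) = T i j := by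
  simp [permAct_apply]

theorem permAct_single (σ : Equiv.Perm (Fin N)) (k l : Fin N) (c : ℝ) :
    permAct σ (single k l c) = single (σ k) (σ l) c := by
  ext i j
  simp only [permAct_apply, single_apply, Equiv.Perm.eq_inv_iff_eq]

end PermAct

namespace EquivariantMaps

variable {N : ℕ} {L : Matrix (Fin N) (Fin N) ℝ →ₗ[ℝ] Matrix (Fin N) (Fin N) ℝ}

def coeff (L : Matrix (Fin N) (Fin N) ℝ →ₗ[ℝ] Matrix (Fin N) (Fin N) ℝ) (q : Fin 4 → Fin N) :
    ℝ :=
  L (single (q 2) (q 3) 1) (q 0) (q 1)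

theorem apply_eq_sum_coeff (T : Matrix (Fin N) (Fin N) ℝ) (i j : Fin N) :
    L T i j = ∑ k, ∑ l, coeff L ![i, j, k, l] * T k l := by
  conv_lhs => rw [matrix_eq_sum_single T]
  simp only [map_sum, Matrix.sum_apply]
  refine Finset.sum_congr rfl fun k _ => Finset.sum_congr rfl fun l _ => ?_
  have hkl : single k l (T k l) = T k l • single k l 1 := by
    rw [smul_single, smul_eq_mul, mul_one]
  rw [hkl, map_smul, Matrix.smul_apply, smul_eq_mul, mul_comm]
  rfl

theorem coeff_comp_perm (hL : L ∈ EquivariantMaps N) (σ : Equiv.Perm (Fin N))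
    (q : Fin 4 → Fin N) : coeff L (σ ∘ q) = coeff L q := by
  simp only [coeff, Function.comp_apply, ← permAct_single, hL σ, permAct_apply_apply]

theorem mem_iff_coeff_comp_perm :
    L ∈ EquivariantMaps N ↔ ∀ (σ : Equiv.Perm (Fin N)) q, coeff L (σ ∘ q) = coeff L q := by
  refine ⟨coeff_comp_perm, fun h σ T => ?_⟩
  ext i j
  rw [apply_eq_sum_coeff]
  conv_rhs => rw [permAct_apply, apply_eq_sum_coeff]
  refine (Fintype.sum_equiv σ _ _ fun k => Fintype.sum_equiv σ _ _ fun l => ?_).symm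
  rw [← h σ, permAct_apply_apply]
  congr 2
  ext a
  fin_cases a <;> simp

theorem coeff_eq_of_eqPattern_eq (hL : L ∈ EquivariantMaps N) {u v : Fin 4 → Fin N}
    (h : eqPattern u = eqPattern v) : coeff L u = coeff L v := by
  obtain ⟨σ, rfl⟩ := Equiv.Perm.exists_comp_eq_of_eqPattern_eq h
  exact coeff_comp_perm hL σ v

/-- The equality patterns of quadruples in `Fin N`, i.e. the partitions of `Fin 4` into at most
`N` blocks. -/
abbrev Patterns (N : ℕ) := Set.range (eqPattern : (Fin 4 → Fin N) → Fin 4 → Fin 4 → Bool)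

noncomputable def ofPattern (N : ℕ) :
    (Patterns N → ℝ) →ₗ[ℝ] Matrix (Fin N) (Fin N) ℝ →ₗ[ℝ] Matrix (Fin N) (Fin N) ℝ :=
  LinearMap.mk₂ ℝ (fun g T => of fun i j => ∑ k, ∑ l, g ⟨eqPattern ![i, j, k, l], _, rfl⟩ * T k l)
    (by intros; ext; simp [add_mul, Finset.sum_add_distrib])
    (by intros; ext; simp [Finset.mul_sum, mul_assoc])
    (by intros; ext; simp [mul_add, Finset.sum_add_distrib])
    (by intros; ext; simp [Finset.mul_sum, mul_left_comm])

theorem ofPattern_apply (g : Patterns N → ℝ) (T : Matrix (Fin N) (Fin N) ℝ) (i j : Fin N) :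
    ofPattern N g T i j = ∑ k, ∑ l, g ⟨eqPattern ![i, j, k, l], _, rfl⟩ * T k l :=
  rfl

theorem coeff_ofPattern (g : Patterns N → ℝ) (q : Fin 4 → Fin N) :
    coeff (ofPattern N g) q = g ⟨eqPattern q, q, rfl⟩ := by
  rw [coeff, ofPattern_apply, Fintype.sum_eq_single (q 2), Fintype.sum_eq_single (q 3)]
  · simp only [single_apply_same, mul_one]
    congr 3
    exact FinVec.etaExpand_eq q
  · intro l hl
    simp [hl.symm]
  · intro k hk
    simp [hk.symm]

theorem ofPattern_mem (g : Patterns N → ℝ) : ofPattern N g ∈ EquivariantMaps N :=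
  mem_iff_coeff_comp_perm.2 fun σ q => by
    simp only [coeff_ofPattern, eqPattern_comp_of_injective σ.injective]

theorem ofPattern_injective : Function.Injective (ofPattern N) := by
  intro g g' h
  funext ⟨_, q, rfl⟩
  rw [← coeff_ofPattern g q, ← coeff_ofPattern g' q, h]

theorem exists_ofPattern_eq (hL : L ∈ EquivariantMaps N) : ∃ g, ofPattern N g = L := by
  refine ⟨fun p => coeff L (Set.rangeSplitting _ p), LinearMap.ext fun T => ?_⟩
  ext i j
  rw [ofPattern_apply, apply_eq_sum_coeff]
  refine Finset.sum_congr rfl fun k _ => Finset.sum_congr rfl fun l _ => ?_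
  rw [coeff_eq_of_eqPattern_eq hL (Set.apply_rangeSplitting _ _)]

noncomputable def ofPatternEquiv (N : ℕ) : (Patterns N → ℝ) ≃ₗ[ℝ] EquivariantMaps N :=
  LinearEquiv.ofBijective ((ofPattern N).codRestrict _ ofPattern_mem)
    ⟨fun _ _ h => ofPattern_injective (congrArg Subtype.val h), fun ⟨_, hL⟩ =>
      (exists_ofPattern_eq hL).imp fun _ hg => Subtype.ext hg⟩

theorem finrank_eq_card_patterns (N : ℕ) :
    Module.finrank ℝ (EquivariantMaps N) = Fintype.card (Patterns N) := by
  rw [← (ofPatternEquiv N).finrank_eq, Module.finrank_fintype_fun_eq_card]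

theorem card_patterns_four : Fintype.card (Patterns 4) = 15 := by
  set_option maxRecDepth 10000 in decide

theorem card_patterns (hN : 4 ≤ N) : Fintype.card (Patterns N) = 15 := by
  rw [← card_patterns_four]
  exact Fintype.card_congr (Equiv.setCongr (range_eqPattern_eq_of_embedding (Fin.castLEEmb hN)))

end EquivariantMaps

/-- For N ≥ 4, the space of permutation-equivariant linear maps from N×N matrices
to N×N matrices has dimension exactly 15. -/
theorem finrank_equivariantMaps (N : ℕ) (hN : 4 ≤ N) :
    Module.finrank ℝ ↥(EquivariantMaps N) = 15 := by
  rw [EquivariantMaps.finrank_eq_card_patterns, EquivariantMaps.card_patterns hN]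
end

section
/- (IR-safety of graph polynomials with no isolated vertices.) Let V be a finite type and E : Multiset (V × V) an edge multiset such that every vertex of V occurs as the first or second coordinate of some edge in E. Let d : Matrix (Fin (N+1)) (Fin (N+1)) ℝ be a matrix whose last row and last column are zero, i.e., d (Fin.last N) j = 0 and d j (Fin.last N) = 0 for all j. Then the graph polynomial of E computed with index set Fin (N+1) equals the graph polynomial of E computed with index set Fin N on the upper-left N×N submatrix of d: appending a zero 4-momentum (whose dot products with everything vanish) does not change the value. -/
/-- The graph polynomial of an edge multiset `E` on a finite vertex type `V`,
evaluated on a matrix `d`: the sum over all functions `i : V → Fin M` of the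
product over edges `(k, l) ∈ E` of `d (i k) (i l)`. -/
def graphPoly {V : Type*} [Fintype V] [DecidableEq V] {M : ℕ}
    (E : Multiset (V × V)) (d : Matrix (Fin M) (Fin M) ℝ) : ℝ :=
  ∑ i : V → Fin M, (E.map fun e => d (i e.1) (i e.2)).prod

/-- IR-safety of graph polynomials with no isolated vertices: appending a zero
4-momentum (whose dot products with everything vanish) does not change the value. -/
theorem graphPoly_ir_safe {V : Type*} [Fintype V] [DecidableEq V] {N : ℕ}
    (E : Multiset (V × V))
    (hE : ∀ v : V, ∃ e ∈ E, e.1 = v ∨ e.2 = v)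
    (d : Matrix (Fin (N + 1)) (Fin (N + 1)) ℝ)
    (hrow : ∀ j, d (Fin.last N) j = 0) (hcol : ∀ j, d j (Fin.last N) = 0) :
    graphPoly E d = graphPoly E (d.submatrix Fin.castSucc Fin.castSucc) := by
  classical
  unfold graphPoly
  rw [← Finset.sum_filter_add_sum_filter_not Finset.univ (fun i => ∀ v, i v ≠ Fin.last N)]
  have h2 : ∑ i ∈ Finset.univ.filter (fun i : V → Fin (N + 1) => ¬ ∀ v, i v ≠ Fin.last N),
      (E.map fun e => d (i e.1) (i e.2)).prod = 0 := by
    apply Finset.sum_eq_zero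
    intro i hi
    simp only [Finset.mem_filter, not_forall, not_not] at hi
    obtain ⟨v, hv⟩ := hi.2
    apply Multiset.prod_eq_zero
    rw [Multiset.mem_map]
    obtain ⟨e, he, h⟩ := hE v
    refine ⟨e, he, ?_⟩
    rcases h with h | h <;> rw [h, hv]
    · exact hrow _
    · exact hcol _
  rw [h2, add_zero]
  refine Finset.sum_bij' (fun i hi => fun v => (i v).castPred ?_)
    (fun j _ => fun v => (j v).castSucc) ?_ ?_ ?_ ?_ ?_
  · simp only [Finset.mem_filter] at hi
    exact hi.2 v
  · intros; exact Finset.mem_univ _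
  · intro j _
    simp only [Finset.mem_filter, Finset.mem_univ, true_and]
    intro v
    exact Fin.castSucc_lt_last _ |>.ne
  · intro i hi
    funext v
    simp [Fin.castSucc_castPred]
  · intro j _
    funext v
    simp
  · intro i hi
    congr 1
end

section
/- Let F : (Fin N → (Fin 4 → ℝ)) → (Fin 4 → ℝ) be equivariant under the full Lorentz group O(1,3), i.e., F (fun i => Λ.mulVec (p i)) = Λ.mulVec (F p) for every Lorentz transformation Λ and every p. If p : Fin N → (Fin 4 → ℝ) is such that the restriction of the Minkowski bilinear form to V = Submodule.span ℝ (Set.range p) is nondegenerate (i.e., every v ∈ V with ⟪v, w⟫ = 0 for all w ∈ V is zero), then F p ∈ V; that is, the output of a Lorentz-equivariant vector-valued map lies in the linear span of its inputs. -/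
/-- A Lorentz transformation preserves the Minkowski inner product. -/
def IsLorentz (Λ : Matrix (Fin 4) (Fin 4) ℝ) : Prop :=
  ∀ p q : Fin 4 → ℝ, mink (Λ.mulVec p) (Λ.mulVec q) = mink p q

namespace LinearMap

section Reflection

variable {R M : Type*} [Ring R] [AddCommGroup M] [Module R M] {V W : Submodule R M}

noncomputable def reflectionOfIsCompl (h : IsCompl V W) : M →ₗ[R] M :=
  ofIsCompl h V.subtype (-W.subtype)

theorem reflectionOfIsCompl_apply_add (h : IsCompl V W) {v w : M} (hv : v ∈ V) (hw : w ∈ W) :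
    reflectionOfIsCompl h (v + w) = v - w := by
  rw [map_add, reflectionOfIsCompl, ← Submodule.coe_mk v hv, ← Submodule.coe_mk w hw,
    ofIsCompl_apply_left, ofIsCompl_apply_right]
  simp [sub_eq_add_neg]

theorem reflectionOfIsCompl_apply_of_mem_left (h : IsCompl V W) {v : M} (hv : v ∈ V) :
    reflectionOfIsCompl h v = v := by
  simpa using reflectionOfIsCompl_apply_add h hv W.zero_mem

theorem mem_left_of_reflectionOfIsCompl_apply_eq [IsAddTorsionFree M] (h : IsCompl V W) {x : M}
    (hx : reflectionOfIsCompl h x = x) : x ∈ V := by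
  obtain ⟨v, w, hv, hw, rfl⟩ := Submodule.codisjoint_iff_exists_add_eq.mp h.codisjoint x
  rw [reflectionOfIsCompl_apply_add h hv hw, sub_eq_add_neg, add_right_inj, neg_eq_iff_add_eq_zero,
    ← two_nsmul, smul_eq_zero] at hx
  simpa [hx.resolve_left two_ne_zero] using hv

end Reflection

theorem BilinForm.isOrthogonal_reflectionOfIsCompl {R M : Type*} [CommRing R] [AddCommGroup M]
    [Module R M] {V W : Submodule R M} {B : LinearMap.BilinForm R M} (hB : B.IsRefl)
    (hW : W ≤ B.orthogonal V) (h : IsCompl V W) : B.IsOrthogonal (reflectionOfIsCompl h) := by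
  intro x y
  obtain ⟨v, w, hv, hw, rfl⟩ := Submodule.codisjoint_iff_exists_add_eq.mp h.codisjoint x
  obtain ⟨v', w', hv', hw', rfl⟩ := Submodule.codisjoint_iff_exists_add_eq.mp h.codisjoint y
  have hvw' : B v w' = 0 := BilinForm.mem_orthogonal_iff.mp (hW hw') v hv
  have hwv' : B w v' = 0 := hB _ _ (BilinForm.mem_orthogonal_iff.mp (hW hw) v' hv')
  simp only [reflectionOfIsCompl_apply_add h hv hw, reflectionOfIsCompl_apply_add h hv' hw',
    map_add, map_sub, LinearMap.add_apply, LinearMap.sub_apply, hvw', hwv']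
  ring

end LinearMap

noncomputable def minkB : LinearMap.BilinForm ℝ (Fin 4 → ℝ) :=
  LinearMap.mk₂ ℝ mink
    (by intros; simp only [mink, Pi.add_apply]; ring)
    (by intros; simp only [mink, Pi.smul_apply, smul_eq_mul]; ring)
    (by intros; simp only [mink, Pi.add_apply]; ring)
    (by intros; simp only [mink, Pi.smul_apply, smul_eq_mul]; ring)

theorem minkB_apply (x y : Fin 4 → ℝ) : minkB x y = mink x y := rfl

theorem minkB_isSymm : minkB.IsSymm :=
  ⟨fun x y => by simp only [minkB_apply, mink]; ring⟩

theorem isLorentz_toMatrix' {f : (Fin 4 → ℝ) →ₗ[ℝ] Fin 4 → ℝ} (hf : minkB.IsOrthogonal f) :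
    IsLorentz (LinearMap.toMatrix' f) := by
  intro x y
  rw [LinearMap.toMatrix'_mulVec, LinearMap.toMatrix'_mulVec]
  exact hf x y

theorem isCompl_orthogonal_minkB {V : Submodule ℝ (Fin 4 → ℝ)}
    (hV : ∀ v ∈ V, (∀ w ∈ V, mink v w = 0) → v = 0) : IsCompl V (minkB.orthogonal V) := by
  refine (LinearMap.BilinForm.isCompl_orthogonal_iff_disjoint minkB_isSymm.isRefl).2 ?_
  refine Submodule.disjoint_def.2 fun v hv hvV => hV v hv fun w hw => ?_
  rw [← minkB_apply, minkB_isSymm.eq]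
  exact LinearMap.BilinForm.mem_orthogonal_iff.mp hvV w hw

/-- If `F` is equivariant under the full Lorentz group O(1,3) and the Minkowski
form restricted to the span of the inputs is nondegenerate, then the output of
`F` lies in the span of the inputs. -/
theorem equivariant_output_in_span {N : ℕ}
    (F : (Fin N → (Fin 4 → ℝ)) → (Fin 4 → ℝ))
    (hF : ∀ Λ : Matrix (Fin 4) (Fin 4) ℝ, IsLorentz Λ →
      ∀ p, F (fun i => Λ.mulVec (p i)) = Λ.mulVec (F p))
    (p : Fin N → (Fin 4 → ℝ))
    (hnd : ∀ v ∈ Submodule.span ℝ (Set.range p),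
      (∀ w ∈ Submodule.span ℝ (Set.range p), mink v w = 0) → v = 0) :
    F p ∈ Submodule.span ℝ (Set.range p) := by
  have hV := isCompl_orthogonal_minkB hnd
  set r := LinearMap.reflectionOfIsCompl hV
  have hr : IsLorentz (LinearMap.toMatrix' r) :=
    isLorentz_toMatrix' (LinearMap.BilinForm.isOrthogonal_reflectionOfIsCompl
      minkB_isSymm.isRefl le_rfl hV)
  have hp : (fun i => (LinearMap.toMatrix' r).mulVec (p i)) = p := funext fun i => by
    rw [LinearMap.toMatrix'_mulVec]
    exact LinearMap.reflectionOfIsCompl_apply_of_mem_left hV (Submodule.subset_span ⟨i, rfl⟩)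
  have hFp := hF _ hr p
  rw [hp, LinearMap.toMatrix'_mulVec] at hFp
  exact LinearMap.mem_left_of_reflectionOfIsCompl_apply_eq hV hFp.symm
end

section
/- (Theorem: IRC-safe Lorentz invariants depend on massless inputs only through their sum.) Let f be an observable family that is smooth, symmetric, Lorentz-invariant, IR-safe, and C-safe. Then for all natural numbers M, M', K, all u : Fin M → (Fin 4 → ℝ) and v : Fin M' → (Fin 4 → ℝ) with each u i and each v j future-pointing lightlike and ∑ i, u i = ∑ j, v j, and every q : Fin K → (Fin 4 → ℝ), one has f (M + K) (Fin.append u q) = f (M' + K) (Fin.append v q); that is, f can depend on its massless inputs only through their total 4-momentum. -/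
/-- A proper orthochronous Lorentz transformation: it preserves the Minkowski
inner product, has determinant 1, and has `Λ 0 0 ≥ 1`. -/
def IsRestrictedLorentz (Λ : Matrix (Fin 4) (Fin 4) ℝ) : Prop :=
  (∀ p q : Fin 4 → ℝ, mink (Λ.mulVec p) (Λ.mulVec q) = mink p q) ∧
    Λ.det = 1 ∧ Λ 0 0 ≥ 1

/-- An observable family that is smooth, symmetric, Lorentz-invariant, IR-safe and
C-safe. -/
structure ObservableFamily where
  f : (N : ℕ) → (Fin N → (Fin 4 → ℝ)) → ℝ
  symmetric : ∀ (N : ℕ) (σ : Equiv.Perm (Fin N)) (p : Fin N → (Fin 4 → ℝ)),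
    f N (p ∘ σ) = f N p
  invariant : ∀ (N : ℕ) (Λ : Matrix (Fin 4) (Fin 4) ℝ), IsRestrictedLorentz Λ →
    ∀ p : Fin N → (Fin 4 → ℝ), f N (fun i => Λ.mulVec (p i)) = f N p
  smooth : ∀ N : ℕ, ContDiff ℝ (⊤ : ℕ∞) (f N)
  irSafe : ∀ (N : ℕ) (p : Fin N → (Fin 4 → ℝ)), f (N + 1) (Fin.snoc p 0) = f N p
  cSafe : ∀ (M : ℕ) (q : Fin 4 → ℝ), mink q q = 0 →
    ∀ (rest : Fin M → (Fin 4 → ℝ)) (l₁ l₂ : ℝ),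
      f (M + 2) (Fin.cons (l₁ • q) (Fin.cons ((1 - l₁) • q) rest)) =
        f (M + 2) (Fin.cons (l₂ • q) (Fin.cons ((1 - l₂) • q) rest))

lemma mink_smul (c : ℝ) (p : Fin 4 → ℝ) : mink (c • p) (c • p) = c * c * mink p p := by
  simp [mink]; ring

lemma mink_neg (p : Fin 4 → ℝ) : mink (-p) (-p) = mink p p := by
  simp [mink]

namespace ObservableFamily

variable (F : ObservableFamily)

lemma f_congr {N₁ N₂ : ℕ} (h : N₂ = N₁) (c : Fin N₁ → Fin 4 → ℝ) (e : Fin N₂ ≃ Fin N₁) :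
    F.f N₁ c = F.f N₂ (c ∘ e) := by
  subst h
  exact (F.symmetric _ e c).symm

lemma ir_many (s N : ℕ) (c : Fin N → Fin 4 → ℝ) :
    F.f (N + s) (Fin.append c (0 : Fin s → Fin 4 → ℝ)) = F.f N c := by
  induction s with
  | zero =>
    have h0 : (0 : Fin 0 → Fin 4 → ℝ) = Fin.elim0 := funext fun i => i.elim0
    rw [h0, Fin.append_elim0]
    exact congrArg (F.f N) (funext fun i => congrArg c (Fin.ext rfl))
  | succ s ih =>
    have h0 : (0 : Fin (s + 1) → Fin 4 → ℝ) = Fin.snoc (0 : Fin s → Fin 4 → ℝ) 0 := by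
      funext i
      refine Fin.lastCases ?_ (fun j => ?_) i <;> simp
    rw [h0, Fin.append_snoc]
    exact (F.irSafe (N + s) (Fin.append c 0)).trans ih

lemma cs2 (N : ℕ) (c : Fin N → Fin 4 → ℝ) (k z : Fin N) (hkz : k ≠ z)
    (p : Fin 4 → ℝ) (hp : mink p p = 0) (l₁ l₂ : ℝ) :
    F.f N (Function.update (Function.update c z ((1 - l₁) • p)) k (l₁ • p)) =
      F.f N (Function.update (Function.update c z ((1 - l₂) • p)) k (l₂ • p)) := by
  obtain ⟨m, rfl⟩ : ∃ m, N = m + 2 := by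
    match N with
    | 0 => exact k.elim0
    | 1 => exact absurd (Subsingleton.elim k z) hkz
    | m + 2 => exact ⟨m, rfl⟩
  set e1 : Equiv.Perm (Fin (m + 2)) := Equiv.swap 0 k with he1
  set z' : Fin (m + 2) := e1 z with hz'
  have h1 : e1 z' = z := Equiv.swap_apply_self _ _ _
  have hz'0 : z' ≠ 0 := by
    intro h
    apply hkz
    have : e1 z' = e1 0 := by rw [h]
    rw [h1] at this
    rw [this]
    exact (Equiv.swap_apply_left 0 k).symm ▸ rfl
  set σ : Equiv.Perm (Fin (m + 2)) := (Equiv.swap 1 z').trans e1 with hσ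
  have hσ0 : σ 0 = k := by
    have h2 : Equiv.swap (1 : Fin (m + 2)) z' 0 = 0 :=
      Equiv.swap_apply_of_ne_of_ne zero_ne_one (Ne.symm hz'0)
    simp only [hσ, Equiv.trans_apply, h2, he1, Equiv.swap_apply_left]
  have hσ1 : σ 1 = z := by
    simp only [hσ, Equiv.trans_apply, Equiv.swap_apply_left, h1]
  set rest : Fin m → Fin 4 → ℝ := fun i => c (σ i.succ.succ) with hrest
  have hform : ∀ l : ℝ,
      (Function.update (Function.update c z ((1 - l) • p)) k (l • p)) ∘ σ =
        Fin.cons (l • p) (Fin.cons ((1 - l) • p) rest) := by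
    intro l
    funext i
    refine Fin.cases ?_ (fun j => ?_) i
    · show Function.update (Function.update c z ((1 - l) • p)) k (l • p) (σ 0) = _
      rw [hσ0, Function.update_self, Fin.cons_zero]
    · refine Fin.cases ?_ (fun j' => ?_) j
      · show Function.update (Function.update c z ((1 - l) • p)) k (l • p) (σ (Fin.succ 0)) = _
        rw [Fin.succ_zero_eq_one, hσ1, Function.update_of_ne (Ne.symm hkz),
          Function.update_self]
        simp
      · have hk : σ j'.succ.succ ≠ k := by
          intro h
          have := σ.injective (h.trans hσ0.symm)
          exact (Fin.succ_ne_zero _) this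
        have hz : σ j'.succ.succ ≠ z := by
          intro h
          have := σ.injective (h.trans hσ1.symm)
          rw [← Fin.succ_zero_eq_one] at this
          exact (Fin.succ_ne_zero _) (Fin.succ_injective _ this)
        simp [Function.update_of_ne hk, Function.update_of_ne hz, hrest]
  calc F.f (m + 2) (Function.update (Function.update c z ((1 - l₁) • p)) k (l₁ • p))
      = F.f (m + 2) ((Function.update (Function.update c z ((1 - l₁) • p)) k (l₁ • p)) ∘ σ) :=
        (F.symmetric _ σ _).symm
    _ = F.f (m + 2) (Fin.cons (l₁ • p) (Fin.cons ((1 - l₁) • p) rest)) := by rw [hform l₁]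
    _ = F.f (m + 2) (Fin.cons (l₂ • p) (Fin.cons ((1 - l₂) • p) rest)) := F.cSafe m p hp rest l₁ l₂
    _ = F.f (m + 2) ((Function.update (Function.update c z ((1 - l₂) • p)) k (l₂ • p)) ∘ σ) := by
        rw [hform l₂]
    _ = F.f (m + 2) (Function.update (Function.update c z ((1 - l₂) • p)) k (l₂ • p)) :=
        F.symmetric _ σ _

lemma master (N : ℕ) (x d : Fin N → Fin 4 → ℝ) (z : Fin N)
    (hxz : x z = 0) (hdz : d z = 0) (hsum : ∑ k, d k = 0)
    (hcond : ∀ k, d k ≠ 0 → mink (d k) (d k) = 0 ∧ ∃ a : ℝ, x k = a • d k) :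
    F.f N (x + d) = F.f N x := by
  have hdiff : Differentiable ℝ (F.f N) := (F.smooth N).differentiable (by simp)
  have hline : ∀ (b e : Fin N → Fin 4 → ℝ) (s₀ : ℝ),
      HasDerivAt (fun s : ℝ => F.f N (b + s • e)) (fderiv ℝ (F.f N) (b + s₀ • e) e) s₀ := by
    intro b e s₀
    have h1 : HasDerivAt (fun s : ℝ => b + s • e) e s₀ := by
      simpa using ((hasDerivAt_id s₀).smul_const e).const_add b
    exact (hdiff _).hasFDerivAt.comp_hasDerivAt s₀ h1
  have key : ∀ y : Fin N → Fin 4 → ℝ, y z = 0 →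
      (∀ k, d k ≠ 0 → ∃ a : ℝ, y k = a • d k) →
      fderiv ℝ (F.f N) y d = 0 := by
    intro y hyz hy
    have single_eq : ∀ k, fderiv ℝ (F.f N) y (Pi.single k (d k)) =
        fderiv ℝ (F.f N) y (Pi.single z (d k)) := by
      intro k
      by_cases hdk : d k = 0
      · rw [hdk]; simp
      · have hkz : k ≠ z := fun h => hdk (h ▸ hdz)
        obtain ⟨hlight, -⟩ := hcond k hdk
        obtain ⟨a, hyk⟩ := hy k hdk
        set p : Fin 4 → ℝ := d k with hpdef
        set w : Fin N → Fin 4 → ℝ := Pi.single k p - Pi.single z p with hw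
        set L := fderiv ℝ (F.f N) y with hL
        suffices hLw : L w = 0 by
          have h2 : L (Pi.single k p) - L (Pi.single z p) = 0 := by
            rw [← map_sub]; exact hLw
          have := sub_eq_zero.mp h2
          exact this
        have hrep : ∀ s : ℝ,
            y + s • w = Function.update (Function.update y z ((-s) • p)) k ((a + s) • p) := by
          intro s
          funext t
          by_cases h1 : t = k
          · rw [h1, Function.update_self]
            have hwk : w k = p := by
              rw [hw]
              simp [Pi.sub_apply, Pi.single_eq_same, Pi.single_eq_of_ne hkz]
            show y k + s • w k = (a + s) • p
            rw [hwk, hyk, add_smul]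
          · rw [Function.update_of_ne h1]
            by_cases h2 : t = z
            · rw [h2, Function.update_self]
              have hwz : w z = -p := by
                rw [hw]
                simp [Pi.sub_apply, Pi.single_eq_same, Pi.single_eq_of_ne (Ne.symm hkz)]
              show y z + s • w z = (-s) • p
              rw [hwz, hyz, zero_add, smul_neg, neg_smul]
            · rw [Function.update_of_ne h2]
              have hwt : w t = 0 := by
                rw [hw]
                simp [Pi.sub_apply, Pi.single_eq_of_ne h1, Pi.single_eq_of_ne h2]
              show y t + s • w t = y t
              rw [hwt, smul_zero, add_zero]
        have hderiv : HasDerivAt (fun s : ℝ => F.f N (y + s • w)) (L w) 0 := by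
          have h := hline y w 0
          simpa using h
        have hswap : ∀ (A B : Fin 4 → ℝ),
            (Function.update (Function.update y z B) k A) ∘ (Equiv.swap k z) =
              Function.update (Function.update y z A) k B := by
          intro A B
          funext t
          show Function.update (Function.update y z B) k A (Equiv.swap k z t) =
            Function.update (Function.update y z A) k B t
          by_cases h1 : t = k
          · rw [h1, Equiv.swap_apply_left, Function.update_of_ne (Ne.symm hkz),
              Function.update_self, Function.update_self]
          · by_cases h2 : t = z
            · rw [h2, Equiv.swap_apply_right, Function.update_self,
                Function.update_of_ne (Ne.symm hkz), Function.update_self]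
            · rw [Equiv.swap_apply_of_ne_of_ne h1 h2, Function.update_of_ne h1,
                Function.update_of_ne h2, Function.update_of_ne h1,
                Function.update_of_ne h2]
        rcases eq_or_ne a 0 with rfl | ha
        · -- even function trick
          have heven : (fun s : ℝ => F.f N (y + s • w)) =
              (fun s : ℝ => F.f N (y + s • w)) ∘ (fun s : ℝ => -s) := by
            funext s
            show F.f N (y + s • w) = F.f N (y + (-s) • w)
            rw [hrep s, hrep (-s)]
            have h3 := F.symmetric N (Equiv.swap k z)
              (Function.update (Function.update y z ((-s) • p)) k ((0 + s) • p))
            rw [hswap ((0 + s) • p) ((-s) • p)] at h3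
            rw [← h3]
            norm_num
          have hneg : HasDerivAt (fun s : ℝ => -s) (-1 : ℝ) 0 := by
            exact (hasDerivAt_id' (0 : ℝ)).neg
          have hderiv2 : HasDerivAt ((fun s : ℝ => F.f N (y + s • w)) ∘ (fun s : ℝ => -s))
              (L w * (-1)) 0 := by
            refine HasDerivAt.comp 0 ?_ hneg
            simpa using hderiv
          rw [← heven] at hderiv2
          have := hderiv.unique hderiv2
          linarith
        · -- constant via cs2
          have hconst : ∀ s : ℝ, F.f N (y + s • w) = F.f N (y + (0 : ℝ) • w) := by
            intro s
            rw [hrep s, hrep 0]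
            have hc := F.cs2 N y k z hkz (a • p) (by rw [mink_smul, hlight]; ring)
              ((a + s) / a) ((a + 0) / a)
            have e1 : ∀ s' : ℝ, ((a + s') / a) • (a • p) = (a + s') • p := by
              intro s'
              rw [smul_smul, div_mul_cancel₀ _ ha]
            have e2 : ∀ s' : ℝ, (1 - (a + s') / a) • (a • p) = (-s') • p := by
              intro s'
              rw [smul_smul]
              congr 1
              field_simp
              ring
            rw [e1 s, e1 0, e2 s, e2 0] at hc
            exact hc
          have : (fun s : ℝ => F.f N (y + s • w)) = fun _ => F.f N (y + (0 : ℝ) • w) :=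
            funext hconst
          have h4 : HasDerivAt (fun s : ℝ => F.f N (y + s • w)) 0 0 := by
            rw [this]; exact hasDerivAt_const _ _
          exact hderiv.unique h4
    calc fderiv ℝ (F.f N) y d
        = fderiv ℝ (F.f N) y (∑ k, Pi.single k (d k)) := by
          rw [Finset.univ_sum_single]
      _ = ∑ k, fderiv ℝ (F.f N) y (Pi.single k (d k)) := map_sum _ _ _
      _ = ∑ k, fderiv ℝ (F.f N) y (Pi.single z (d k)) := Finset.sum_congr rfl fun k _ => single_eq k
      _ = fderiv ℝ (F.f N) y (Pi.single z (∑ k, d k)) := by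
          rw [← map_sum]
          congr 1
          exact (map_sum (LinearMap.single ℝ (fun _ : Fin N => (Fin 4 → ℝ)) z) _ _).symm
      _ = 0 := by rw [hsum]; simp
  have hphi : ∀ τ : ℝ, HasDerivAt (fun τ : ℝ => F.f N (x + τ • d)) 0 τ := by
    intro τ
    have h := hline x d τ
    have h0 : fderiv ℝ (F.f N) (x + τ • d) d = 0 := by
      apply key
      · show x z + τ • d z = 0
        rw [hxz, hdz]; simp
      · intro k hdk
        obtain ⟨-, a, hxk⟩ := hcond k hdk
        refine ⟨a + τ, ?_⟩
        show x k + τ • d k = (a + τ) • d k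
        rw [hxk, add_smul]
    rwa [h0] at h
  have hconst := is_const_of_deriv_eq_zero (fun τ => (hphi τ).differentiableAt)
    (fun τ => (hphi τ).deriv) 1 0
  simpa using hconst

end ObservableFamily

/-- A shuffle of four summands: `(A ⊕ B) ⊕ (C ⊕ D) ≃ (C ⊕ B) ⊕ (A ⊕ D)`. -/
def blockShuffle (A B C D : Type*) : (A ⊕ B) ⊕ (C ⊕ D) ≃ (C ⊕ B) ⊕ (A ⊕ D) where
  toFun x := match x with
    | .inl (.inl a) => .inr (.inl a)
    | .inl (.inr b) => .inl (.inr b)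
    | .inr (.inl c) => .inl (.inl c)
    | .inr (.inr d) => .inr (.inr d)
  invFun x := match x with
    | .inl (.inl c) => .inr (.inl c)
    | .inl (.inr b) => .inl (.inr b)
    | .inr (.inl a) => .inl (.inl a)
    | .inr (.inr d) => .inr (.inr d)
  left_inv x := by rcases x with (a | b) | (c | d) <;> rfl
  right_inv x := by rcases x with (c | b) | (a | d) <;> rfl

/-- IRC-safe Lorentz invariants depend on massless inputs only through their
total 4-momentum. -/
theorem ircSafe_depends_on_massless_only_through_sum (F : ObservableFamily) :
    ∀ (M M' K : ℕ) (u : Fin M → (Fin 4 → ℝ)) (v : Fin M' → (Fin 4 → ℝ)),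
      (∀ i, FPLightlike (u i)) → (∀ j, FPLightlike (v j)) →
      (∑ i, u i) = (∑ j, v j) →
      ∀ q : Fin K → (Fin 4 → ℝ),
        F.f (M + K) (Fin.append u q) = F.f (M' + K) (Fin.append v q) := by
  intro M M' K u v hu hv hsum q
  -- the big configuration and the displacement
  set x : Fin ((M + K) + (M' + 2)) → (Fin 4 → ℝ) :=
    Fin.append (Fin.append u q) 0 with hxdef
  set d : Fin ((M + K) + (M' + 2)) → (Fin 4 → ℝ) :=
    Fin.append (Fin.append (fun i => -(u i)) (0 : Fin K → Fin 4 → ℝ))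
      (Fin.append v (0 : Fin 2 → Fin 4 → ℝ)) with hddef
  set z : Fin ((M + K) + (M' + 2)) := Fin.natAdd (M + K) (Fin.natAdd M' (0 : Fin 2)) with hzdef
  have hxz : x z = 0 := by
    rw [hxdef, hzdef, Fin.append_right]
    rfl
  have hdz : d z = 0 := by
    rw [hddef, hzdef, Fin.append_right, Fin.append_right]
    rfl
  have hsum0 : ∑ k, d k = 0 := by
    rw [hddef]
    rw [Fin.sum_univ_add]
    simp only [Fin.append_left, Fin.append_right]
    rw [Fin.sum_univ_add, Fin.sum_univ_add]
    simp only [Fin.append_left, Fin.append_right, Pi.zero_apply, Finset.sum_const_zero,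
      Finset.sum_neg_distrib]
    rw [hsum]
    abel
  have hcond : ∀ k, d k ≠ 0 → mink (d k) (d k) = 0 ∧ ∃ a : ℝ, x k = a • d k := by
    intro k
    rw [hddef, hxdef]
    refine Fin.addCases (fun j => ?_) (fun j => ?_) k
    · refine Fin.addCases (fun i => ?_) (fun i => ?_) j
      · intro _
        simp only [Fin.append_left]
        refine ⟨(mink_neg (u i)) ▸ (hu i).2, ⟨-1, ?_⟩⟩
        simp
      · intro h
        exact absurd (by simp [Fin.append_left]) h
    · refine Fin.addCases (fun i => ?_) (fun i => ?_) j
      · intro _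
        simp only [Fin.append_right, Fin.append_left]
        exact ⟨(hv i).2, ⟨0, by simp⟩⟩
      · intro h
        exact absurd (by simp [Fin.append_right]) h
  have h1 := F.master _ x d z hxz hdz hsum0 hcond
  have hxd : x + d = Fin.append (Fin.append (0 : Fin M → Fin 4 → ℝ) q)
      (Fin.append v (0 : Fin 2 → Fin 4 → ℝ)) := by
    funext t
    show x t + d t = _
    rw [hxdef, hddef]
    refine Fin.addCases (fun j => ?_) (fun j => ?_) t
    · refine Fin.addCases (fun i => ?_) (fun i => ?_) j <;>
        simp [Fin.append_left]
    · simp [Fin.append_right]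
  -- left reduction
  have hleft : F.f ((M + K) + (M' + 2)) x = F.f (M + K) (Fin.append u q) := by
    rw [hxdef]
    exact F.ir_many (M' + 2) (M + K) (Fin.append u q)
  -- right reduction : rearrange and strip zeros
  have hT : (M' + K) + (M + 2) = (M + K) + (M' + 2) := by omega
  set e : Fin ((M' + K) + (M + 2)) ≃ Fin ((M + K) + (M' + 2)) :=
    (finSumFinEquiv.symm.trans
      ((Equiv.sumCongr finSumFinEquiv.symm finSumFinEquiv.symm).trans
        ((blockShuffle (Fin M') (Fin K) (Fin M) (Fin 2)).trans
          ((Equiv.sumCongr finSumFinEquiv finSumFinEquiv).trans finSumFinEquiv)))) with hedef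
  have hre : F.f ((M + K) + (M' + 2))
        (Fin.append (Fin.append (0 : Fin M → Fin 4 → ℝ) q)
          (Fin.append v (0 : Fin 2 → Fin 4 → ℝ))) =
      F.f ((M' + K) + (M + 2)) (Fin.append (Fin.append v q) (0 : Fin (M + 2) → Fin 4 → ℝ)) := by
    rw [F.f_congr hT _ e]
    congr 1
    funext t
    show (Fin.append (Fin.append (0 : Fin M → Fin 4 → ℝ) q)
        (Fin.append v (0 : Fin 2 → Fin 4 → ℝ))) (e t) = _
    obtain ⟨st, rfl⟩ := finSumFinEquiv.surjective t
    rcases st with s | s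
    · obtain ⟨s', rfl⟩ := finSumFinEquiv.surjective s
      rcases s' with i | i <;>
        simp [hedef, blockShuffle, Fin.append_left, Fin.append_right]
    · obtain ⟨s', rfl⟩ := finSumFinEquiv.surjective s
      rcases s' with i | i <;>
        simp [hedef, blockShuffle, Fin.append_left, Fin.append_right]
  have hright : F.f ((M' + K) + (M + 2))
      (Fin.append (Fin.append v q) (0 : Fin (M + 2) → Fin 4 → ℝ)) =
      F.f (M' + K) (Fin.append v q) := F.ir_many (M + 2) (M' + K) (Fin.append v q)
  calc F.f (M + K) (Fin.append u q) = F.f ((M + K) + (M' + 2)) x := hleft.symm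
    _ = F.f ((M + K) + (M' + 2)) (x + d) := h1.symm
    _ = F.f ((M' + K) + (M + 2)) (Fin.append (Fin.append v q) 0) := by rw [hxd]; exact hre
    _ = F.f (M' + K) (Fin.append v q) := hright
end

section
/- (Deep Sets representation.) Let N be a natural number and let f : (Fin N → ℝ) → ℝ be continuous and permutation-invariant, i.e., f (x ∘ σ) = f x for every permutation σ of Fin N. Then there exist a continuous map φ : ℝ → (Fin (N+1) → ℝ) and a continuous map ψ : (Fin (N+1) → ℝ) → ℝ such that f x = ψ (∑ i, φ (x i)) for all x : Fin N → ℝ. -/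
/-!
Sorting the inputs reduces to the closed set `K` of monotone tuples, which meets every orbit of
the permutation action exactly once. The power-sum map `p x = (∑ i, x i ^ k)ₖ`, `k = 1, …, N + 1`,
is permutation invariant, injective on `K` by Newton's identities, and proper because its
coordinate `k = 2` dominates `‖x‖²`. So it restricts to a closed embedding of `K`, along which
Tietze's theorem extends `f|K` to a continuous `ψ` on `ℝ^(N+1)`; then
`f x = f (sort x) = ψ (p (sort x)) = ψ (p x)`.
-/

open Finset Filter Topology

section NewtonIdentities

variable {R ι : Type*} [CommRing R] [IsDomain R] [CharZero R] [Fintype ι]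

theorem esymm_map_eq_of_sum_pow_eq {x y : ι → R}
    (h : ∀ k ∈ Icc 1 (Fintype.card ι), ∑ i, x i ^ k = ∑ i, y i ^ k) :
    ∀ j ≤ Fintype.card ι, (univ.val.map x).esymm j = (univ.val.map y).esymm j := by
  intro j
  induction j using Nat.strong_induction_on with
  | _ j ih =>
  intro hj
  rcases j.eq_zero_or_pos with rfl | hj₀
  · simp only [Multiset.esymm, Multiset.powersetCard_zero_left, Multiset.map_singleton,
      Multiset.prod_zero, Multiset.sum_singleton]
  -- Newton's identity expresses `j • eⱼ` through the `eₐ` with `a < j` and the power sums.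
  have newton (z : ι → R) := congrArg (MvPolynomial.aeval z) (MvPolynomial.mul_esymm_eq_sum ι R j)
  simp only [map_mul, map_natCast, map_sum, map_pow, map_neg, map_one,
    MvPolynomial.aeval_esymm_eq_multiset_esymm, MvPolynomial.psum, MvPolynomial.aeval_X] at newton
  refine mul_left_cancel₀ (Nat.cast_ne_zero.mpr hj₀.ne' : (j : R) ≠ 0) ?_
  rw [newton x, newton y]
  refine congrArg _ (sum_congr rfl fun a ha => ?_)
  rw [mem_filter, HasAntidiagonal.mem_antidiagonal] at ha
  rw [ih a.1 ha.2 (by omega), h a.2 (mem_Icc.mpr ⟨by omega, by omega⟩)]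

theorem map_univ_eq_of_sum_pow_eq {x y : ι → R}
    (h : ∀ k ∈ Icc 1 (Fintype.card ι), ∑ i, x i ^ k = ∑ i, y i ^ k) :
    univ.val.map x = univ.val.map y := by
  have hprod : ((univ.val.map x).map fun t => Polynomial.X - Polynomial.C t).prod =
      ((univ.val.map y).map fun t => Polynomial.X - Polynomial.C t).prod := by
    simp only [Multiset.prod_X_sub_X_eq_sum_esymm, Multiset.card_map, Finset.card_val,
      Finset.card_univ]
    refine sum_congr rfl fun j hj => ?_
    rw [esymm_map_eq_of_sum_pow_eq h j (Nat.lt_succ_iff.mp (mem_range.mp hj))]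
  simpa only [Polynomial.roots_multiset_prod_X_sub_C] using congrArg Polynomial.roots hprod

end NewtonIdentities

theorem eq_of_monotone_of_map_univ_eq {α : Type*} [LinearOrder α] {n : ℕ} {x y : Fin n → α}
    (hx : Monotone x) (hy : Monotone y) (h : univ.val.map x = univ.val.map y) : x = y := by
  rw [Fin.univ_val_map, Fin.univ_val_map, Multiset.coe_eq_coe] at h
  exact List.ofFn_injective (h.eq_of_sortedLE hx.sortedLE_ofFn hy.sortedLE_ofFn)

namespace DeepSets

variable {N : ℕ}

def powerVector (N : ℕ) (t : ℝ) : Fin (N + 1) → ℝ := fun k => t ^ (k.val + 1)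

def powerSums (x : Fin N → ℝ) : Fin (N + 1) → ℝ := ∑ i, powerVector N (x i)

theorem continuous_powerVector : Continuous (powerVector N) :=
  continuous_pi fun k => continuous_pow (k.val + 1)

theorem powerSums_apply (x : Fin N → ℝ) (k : Fin (N + 1)) :
    powerSums x k = ∑ i, x i ^ (k.val + 1) := by
  simp only [powerSums, powerVector, Finset.sum_apply]

theorem continuous_powerSums : Continuous (powerSums (N := N)) :=
  continuous_finsetSum _ fun i _ => continuous_powerVector.comp (continuous_apply i)

theorem powerSums_comp_perm (x : Fin N → ℝ) (σ : Equiv.Perm (Fin N)) :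
    powerSums (x ∘ σ) = powerSums x :=
  Equiv.sum_comp σ fun i => powerVector N (x i)

theorem sq_norm_le_norm_powerSums (x : Fin N → ℝ) : ‖x‖ ^ 2 ≤ ‖powerSums x‖ := by
  refine (Real.le_sqrt (norm_nonneg _) (norm_nonneg _)).mp ((pi_norm_le_iff_of_nonneg
    (Real.sqrt_nonneg _)).mpr fun i => Real.abs_le_sqrt ?_)
  let two : Fin (N + 1) := ⟨1, Nat.succ_lt_succ (Nat.zero_lt_of_lt i.isLt)⟩
  calc x i ^ 2 ≤ ∑ j, x j ^ 2 := single_le_sum (fun j _ => sq_nonneg (x j)) (mem_univ i)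
    _ = powerSums x two := (powerSums_apply x two).symm
    _ ≤ ‖powerSums x‖ := (le_abs_self _).trans (norm_le_pi_norm (powerSums x) two)

theorem isProperMap_powerSums : IsProperMap (powerSums (N := N)) := by
  refine isProperMap_iff_tendsto_cocompact.mpr ⟨continuous_powerSums,
    tendsto_cocompact_cocompact_of_norm fun ε => ⟨max ε 1, fun x hx => ?_⟩⟩
  nlinarith [sq_norm_le_norm_powerSums x, le_max_left ε 1, le_max_right ε 1]

theorem injOn_powerSums_monotone : {x : Fin N → ℝ | Monotone x}.InjOn powerSums :=
  fun x hx y hy h => eq_of_monotone_of_map_univ_eq hx hy <| map_univ_eq_of_sum_pow_eq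
    fun k hk => by
      obtain ⟨hk₁, hkN⟩ := mem_Icc.mp hk
      rw [Fintype.card_fin] at hkN
      simpa only [powerSums_apply, Nat.sub_add_cancel hk₁] using congrFun h ⟨k - 1, by omega⟩

theorem isClosedEmbedding_powerSums_monotone :
    IsClosedEmbedding fun x : {x : Fin N → ℝ // Monotone x} => powerSums x.val := by
  have hproper := isProperMap_powerSums.restrict (isClosed_monotone (β := Fin N) (α := ℝ))
  exact .of_continuous_injective_isClosedMap hproper.continuous
    injOn_powerSums_monotone.injective hproper.isClosedMap

end DeepSets

open DeepSets in
/-- Deep Sets representation: every continuous permutation-invariant function of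
N real inputs can be written as `ψ (∑ i, φ (x i))` with continuous `φ` and `ψ`
and a latent space of dimension N + 1. -/
theorem deep_sets_representation (N : ℕ) (f : (Fin N → ℝ) → ℝ)
    (hcont : Continuous f)
    (hsym : ∀ (σ : Equiv.Perm (Fin N)) (x : Fin N → ℝ), f (x ∘ σ) = f x) :
    ∃ (φ : ℝ → (Fin (N + 1) → ℝ)) (ψ : (Fin (N + 1) → ℝ) → ℝ),
      Continuous φ ∧ Continuous ψ ∧ ∀ x, f x = ψ (∑ i, φ (x i)) := by
  obtain ⟨ψ, hψ⟩ := ContinuousMap.exists_extension' isClosedEmbedding_powerSums_monotone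
    ⟨fun x : {x : Fin N → ℝ // Monotone x} => f x, hcont.comp continuous_subtype_val⟩
  refine ⟨powerVector N, ψ, continuous_powerVector, ψ.continuous, fun x => ?_⟩
  let xs : {x : Fin N → ℝ // Monotone x} := ⟨x ∘ Tuple.sort x, Tuple.monotone_sort x⟩
  calc f x = f xs := (hsym _ x).symm
    _ = ψ (powerSums xs) := (congrFun hψ xs).symm
    _ = ψ (powerSums x) := by rw [powerSums_comp_perm]
end
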